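/- Let q ∈ (0,1), let f : ℝ → ℝ be continuously differentiable, and let T = {0} ∪ {q^n | n ∈ ℕ, n ≥ 1}, a = 0, b = q (so ρ_T(q) = q²). Then the series ∑_{n=1}^∞ (q^n − q^{n+1})·f(q^{n+1}) converges and ∑_{n=1}^∞ (q^n − q^{n+1})·f(q^{n+1}) = q·f(q) − ∫_0^q S_T(s)·f′(s) ds, where the integral is the (Riemann/Lebesgue) integral on ℝ. -/

import Mathlib

open Set

/-- Forward jump operator of a time scale `T`. -/
noncomputable def tsSigma (T : Set ℝ) (t : ℝ) : ℝ := sInf {s | s ∈ T ∧ t < s}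

/-- Backward jump operator of a time scale `T`. -/
noncomputable def tsRho (T : Set ℝ) (t : ℝ) : ℝ := sSup {s | s ∈ T ∧ s < t}

/-- The function `S_T : [a,b] → ℝ`: `S_T t = sInf {s ∈ T ∩ [a,b] | s > t}` for
`t ∈ [a, ρ_T b)` and `S_T t = b` for `t ∈ [ρ_T b, b]`. -/
noncomputable def tsS (T : Set ℝ) (a b : ℝ) : ℝ → ℝ :=
  fun t => if t < tsRho T b then sInf {s | s ∈ T ∩ Set.Icc a b ∧ t < s} else b

/-- The set `I(T)` associated to `a, b ∈ T`: the union of the intervals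
`[τ, σ_T(τ))` over right-discrete `τ ∈ T` with `a ≤ τ < ρ_T(b)`. -/
noncomputable def tsI (T : Set ℝ) (a b : ℝ) : Set ℝ :=
  ⋃ τ ∈ {τ | τ ∈ T ∧ a ≤ τ ∧ τ < tsRho T b ∧ τ < tsSigma T τ}, Set.Ico τ (tsSigma T τ)


/-- The time scale `{0} ∪ {q ^ n | n ≥ 1}`. -/
def qScale (q : ℝ) : Set ℝ := {0} ∪ {x | ∃ n : ℕ, 1 ≤ n ∧ x = q ^ n}

/-!
On `[q ^ (n + 2), q ^ (n + 1))` the function `S_T` is the constant `q ^ (n + 1)`, so the integral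
of `S_T f'` over that piece is `q ^ (n + 1) (f (q ^ (n + 1)) - f (q ^ (n + 2)))`. Consequently the
`n`-th term of the series is `u n - u (n + 1)` for
`u n = q ^ (n + 1) f (q ^ (n + 1)) + ∫_{q ^ (n + 1)}^q S_T f'`, and the series telescopes to
`u 0 - lim u = q f q - ∫_0^q S_T f'`. The limit exists because `S_T` is monotone, hence `S_T f'` is
locally integrable and its primitive is continuous; absolute convergence comes from comparison
with the geometric series.
-/

open Filter Topology MeasureTheory intervalIntegral

theorem hasSum_sub_succ_of_tendsto {G : Type*} [AddCommGroup G] [TopologicalSpace G]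
    [IsTopologicalAddGroup G] [T2Space G] {u : ℕ → G} {l : G}
    (hs : Summable fun n => u n - u (n + 1)) (hu : Tendsto u atTop (𝓝 l)) :
    HasSum (fun n => u n - u (n + 1)) (u 0 - l) := by
  have hpartial := hs.hasSum.tendsto_sum_nat
  simp only [Finset.sum_range_sub'] at hpartial
  rw [tendsto_nhds_unique (tendsto_const_nhds.sub hu) hpartial]
  exact hs.hasSum

theorem tsS_monotone {T : Set ℝ} {a b : ℝ} (hb : b ∈ T) (hab : a ≤ b) (hρ : tsRho T b ≤ b) :
    Monotone (tsS T a b) := by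
  have hbdd : ∀ t, BddBelow {s | s ∈ T ∩ Icc a b ∧ t < s} := fun t => ⟨a, fun s hs => hs.1.2.1⟩
  have hmem : ∀ t < tsRho T b, b ∈ {s | s ∈ T ∩ Icc a b ∧ t < s} :=
    fun t ht => ⟨⟨hb, hab, le_rfl⟩, ht.trans_le hρ⟩
  intro t₁ t₂ hle
  unfold tsS
  split_ifs with h₁ h₂ h₂
  · exact csInf_le_csInf (hbdd t₁) ⟨b, hmem t₂ h₂⟩ fun s hs => ⟨hs.1, hle.trans_lt hs.2⟩
  · exact csInf_le (hbdd t₁) (hmem t₁ h₁)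
  · exact absurd (hle.trans_lt h₂) h₁
  · exact le_rfl

theorem integral_mul_deriv_of_eqOn_Ico {g f : ℝ → ℝ} {a b c : ℝ} (hab : a ≤ b)
    (hg : EqOn g (fun _ => c) (Ico a b)) (hf : ContDiff ℝ 1 f) :
    ∫ x in a..b, g x * deriv f x = c * (f b - f a) := by
  calc ∫ x in a..b, g x * deriv f x = ∫ x in a..b, c * deriv f x := by
        simp only [integral_of_le hab, integral_Ioc_eq_integral_Ioo]
        exact setIntegral_congr_fun measurableSet_Ioo fun x hx => by rw [hg ⟨hx.1.le, hx.2⟩]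
    _ = c * (f b - f a) := by
        rw [intervalIntegral.integral_const_mul, integral_deriv_eq_sub
          (fun x _ => (hf.differentiable one_ne_zero).differentiableAt)
          ((hf.continuous_deriv le_rfl).intervalIntegrable _ _)]

theorem continuous_integral_left {F : ℝ → ℝ} (hF : ∀ a b, IntervalIntegrable F volume a b)
    (b : ℝ) : Continuous fun x => ∫ s in x..b, F s := by
  simp only [integral_symm b]
  exact (continuous_primitive hF b).neg

theorem tendsto_comp_pow_add {X : Type*} [TopologicalSpace X] {q : ℝ} (hq0 : 0 ≤ q) (hq1 : q < 1)
    {g : ℝ → X} (hg : ContinuousAt g 0) (k : ℕ) :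
    Tendsto (fun n => g (q ^ (n + k))) atTop (𝓝 (g 0)) :=
  hg.tendsto.comp <| (tendsto_pow_atTop_nhds_zero_of_lt_one hq0 hq1).comp (tendsto_add_atTop_nat k)

theorem summable_pow_sub_pow_mul {q : ℝ} (hq0 : 0 ≤ q) (hq1 : q < 1) {g : ℝ → ℝ}
    (hg : ContinuousAt g 0) : Summable fun n => (q ^ (n + 1) - q ^ (n + 2)) * g (q ^ (n + 2)) := by
  have hgeom := summable_geometric_of_lt_one hq0 hq1
  refine Summable.mul_tendsto_const (c := g 0) (((summable_nat_add_iff 1).2 hgeom).sub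
    ((summable_nat_add_iff 2).2 hgeom)).abs ?_
  rw [Nat.cofinite_eq_atTop]
  exact tendsto_comp_pow_add hq0 hq1 hg 2

section qScale

variable {q : ℝ}

theorem pow_mem_qScale {n : ℕ} (hn : 1 ≤ n) : q ^ n ∈ qScale q := Or.inr ⟨n, hn, rfl⟩

theorem le_pow_add_two_of_mem_qScale (hq0 : 0 < q) (hq1 : q < 1) {x : ℝ} (hx : x ∈ qScale q)
    {n : ℕ} (hlt : x < q ^ (n + 1)) : x ≤ q ^ (n + 2) := by
  obtain rfl | ⟨m, -, rfl⟩ := hx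
  · positivity
  · exact pow_le_pow_of_le_one hq0.le hq1.le ((pow_lt_pow_iff_right_of_lt_one₀ hq0 hq1).1 hlt)

theorem tsRho_qScale (hq0 : 0 < q) (hq1 : q < 1) : tsRho (qScale q) q = q ^ 2 :=
  IsGreatest.csSup_eq ⟨⟨pow_mem_qScale one_le_two, pow_lt_self_of_lt_one₀ hq0 hq1 one_lt_two⟩,
    fun _ hs => le_pow_add_two_of_mem_qScale hq0 hq1 hs.1 (n := 0) (by simpa using hs.2)⟩

theorem tsS_qScale_monotone (hq0 : 0 < q) (hq1 : q < 1) : Monotone (tsS (qScale q) 0 q) :=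
  tsS_monotone (by simpa using pow_mem_qScale (q := q) le_rfl) hq0.le <| by
    rw [tsRho_qScale hq0 hq1]; exact (pow_lt_self_of_lt_one₀ hq0 hq1 one_lt_two).le

theorem isLeast_qScale_gt (hq0 : 0 < q) (hq1 : q < 1) {n : ℕ} {t : ℝ}
    (ht : t ∈ Ico (q ^ (n + 2)) (q ^ (n + 1))) :
    IsLeast {s | s ∈ qScale q ∩ Icc 0 q ∧ t < s} (q ^ (n + 1)) :=
  ⟨⟨⟨pow_mem_qScale (Nat.le_add_left 1 n), by positivity,
      pow_le_of_le_one hq0.le hq1.le n.succ_ne_zero⟩, ht.2⟩,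
    fun s hs => not_lt.1 fun hlt =>
      (le_pow_add_two_of_mem_qScale hq0 hq1 hs.1.1 hlt).not_gt (ht.1.trans_lt hs.2)⟩

theorem tsS_qScale_eq (hq0 : 0 < q) (hq1 : q < 1) {n : ℕ} {t : ℝ}
    (ht : t ∈ Ico (q ^ (n + 2)) (q ^ (n + 1))) : tsS (qScale q) 0 q t = q ^ (n + 1) := by
  rw [tsS, tsRho_qScale hq0 hq1]
  split_ifs with h
  · exact (isLeast_qScale_gt hq0 hq1 ht).csInf_eq
  · obtain rfl : n = 0 := by
      have := (pow_lt_pow_iff_right_of_lt_one₀ hq0 hq1).1 ((not_lt.1 h).trans_lt ht.2)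
      omega
    simp

end qScale

theorem stmt12 (q : ℝ) (hq : q ∈ Set.Ioo (0 : ℝ) 1) (f : ℝ → ℝ) (hf : ContDiff ℝ 1 f) :
    HasSum (fun n : ℕ => (q ^ (n + 1) - q ^ (n + 2)) * f (q ^ (n + 2)))
      (q * f q - ∫ s in (0 : ℝ)..q, tsS (qScale q) 0 q s * deriv f s) := by
  obtain ⟨hq0, hq1⟩ := hq
  set F : ℝ → ℝ := fun s => tsS (qScale q) 0 q s * deriv f s
  have hF : ∀ a b, IntervalIntegrable F volume a b := fun a b =>
    ((tsS_qScale_monotone hq0 hq1).monotoneOn _).intervalIntegrable.mul_continuousOn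
      (hf.continuous_deriv le_rfl).continuousOn
  set u : ℕ → ℝ := fun n => q ^ (n + 1) * f (q ^ (n + 1)) + ∫ s in q ^ (n + 1)..q, F s
  have hterm : ∀ n, (q ^ (n + 1) - q ^ (n + 2)) * f (q ^ (n + 2)) = u n - u (n + 1) := by
    intro n
    have hpiece : ∫ s in q ^ (n + 2)..q ^ (n + 1), F s =
        q ^ (n + 1) * (f (q ^ (n + 1)) - f (q ^ (n + 2))) :=
      integral_mul_deriv_of_eqOn_Ico (pow_le_pow_of_le_one hq0.le hq1.le (by omega))
        (fun _ hs => tsS_qScale_eq hq0 hq1 hs) hf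
    have hsplit := integral_interval_sub_left (hF (q ^ (n + 2)) q) (hF _ (q ^ (n + 1)))
    linear_combination hsplit + hpiece
  have hu : Tendsto u atTop (𝓝 (0 * f 0 + ∫ s in 0..q, F s)) :=
    tendsto_comp_pow_add hq0.le hq1
      ((continuous_id.mul hf.continuous).add (continuous_integral_left hF q)).continuousAt 1
  have hsum := summable_pow_sub_pow_mul hq0.le hq1 hf.continuous.continuousAt
  simp only [hterm] at hsum ⊢
  simpa [u] using hasSum_sub_succ_of_tendsto hsum hu
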